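/- arXiv:2503.11149 — 5 statements merged into one kernel-verified Lean document; each statement's English description precedes it below -/
import Mathlib

section
/- Let N, n ∈ ℕ and let {𝒢_i}_{i=1}^n be directed graphs on a common vertex set X of size N, each 𝒢_i being d_i-regular (every vertex has in-degree and out-degree d_i) and loopless, with d_1 ≤ ⋯ ≤ d_n. Then there exists a directed graph 𝒢 (on vertex set X × {0,…,n}) whose automorphism group is isomorphic to ⋂_{i=1}^n Aut(𝒢_i). -/
/-!
Stack `n + 1` copies of `X` as layers `0, …, n`, join each vertex `(x, k)` to its copy
`(x, k + 1)` in the next layer, draw `𝒢_i` inside layer `i`, and put a loop at every vertex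
of layer `0`. Since the `𝒢_i` are loopless, the loops single out layer `0`, and the rungs
between consecutive layers then force every automorphism to fix each layer and to act by one
and the same permutation `σ` of `X` on all of them. Such a `σ` preserves the edges inside
layer `i` exactly when it is an automorphism of `𝒢_i`.
-/

/-- The automorphism group of a directed graph given by an edge relation `E`,
as a subgroup of the symmetric group of the vertex set. -/
def dirAut {V : Type*} (E : V → V → Prop) : Subgroup (Equiv.Perm V) where
  carrier := {φ | ∀ v w, E v w ↔ E (φ v) (φ w)}
  one_mem' := by intro v w; simp
  mul_mem' := by
    intro φ ψ hφ hψ v w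
    simpa [Equiv.Perm.mul_apply] using (hψ v w).trans (hφ (ψ v) (ψ w))
  inv_mem' := by
    intro φ hφ v w
    have := (hφ (φ⁻¹ v) (φ⁻¹ w)).symm
    simpa using this

lemma mem_dirAut_of_map_edge {V : Type*} {E : V → V → Prop} {φ : Equiv.Perm V}
    (h : ∀ v w, E v w → E (φ v) (φ w)) (h' : ∀ v w, E v w → E (φ⁻¹ v) (φ⁻¹ w)) :
    φ ∈ dirAut E :=
  fun v w => ⟨h v w, fun hvw => by simpa using h' _ _ hvw⟩

namespace Equiv.Perm

variable {X : Type*} (Y : Type*)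

def prodCongrLeftHom : Perm X →* Perm (X × Y) where
  toFun σ := σ.prodCongr (Equiv.refl Y)
  map_one' := rfl
  map_mul' _ _ := rfl

variable {Y}

@[simp]
lemma prodCongrLeftHom_apply (σ : Perm X) (p : X × Y) :
    prodCongrLeftHom Y σ p = (σ p.1, p.2) := rfl

lemma prodCongrLeftHom_injective [Nonempty Y] :
    Function.Injective (prodCongrLeftHom (X := X) Y) := by
  intro σ τ h
  ext x
  simpa using congrArg (fun Φ : Perm (X × Y) => (Φ (x, Classical.arbitrary Y)).1) h

lemma mem_range_prodCongrLeftHom [Nonempty Y] {Φ : Perm (X × Y)} {f : X → X}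
    (hΦ : ∀ x y, Φ (x, y) = (f x, y)) : Φ ∈ (prodCongrLeftHom (X := X) Y).range := by
  have hf : f.Bijective := by
    refine ⟨fun x x' h => ?_, fun x => ?_⟩
    · have y := Classical.arbitrary Y
      exact congrArg Prod.fst (Φ.injective ((hΦ x y).trans (h ▸ (hΦ x' y).symm)))
    · obtain ⟨⟨x', y⟩, hx'⟩ := Φ.surjective (x, Classical.arbitrary Y)
      exact ⟨x', by simpa [hΦ] using congrArg Prod.fst hx'⟩
  exact ⟨Equiv.ofBijective f hf, Equiv.ext fun ⟨x, y⟩ => (hΦ x y).symm⟩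

end Equiv.Perm

section LayeredGraph

open Equiv.Perm

variable {X : Type*} {n : ℕ} {E : Fin n → X → X → Prop}

inductive LayeredGraph (E : Fin n → X → X → Prop) : X × Fin (n + 1) → X × Fin (n + 1) → Prop
  | loop (x : X) : LayeredGraph E (x, 0) (x, 0)
  | rung (x : X) (i : Fin n) : LayeredGraph E (x, i.castSucc) (x, i.succ)
  | layer (i : Fin n) {x y : X} : E i x y → LayeredGraph E (x, i.castSucc) (y, i.castSucc)

lemma LayeredGraph.snd_eq_or {p q : X × Fin (n + 1)} (h : LayeredGraph E p q) :
    q.2 = p.2 ∨ (q.1 = p.1 ∧ (q.2 : ℕ) = p.2 + 1) := by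
  rcases h with x | ⟨x, i⟩ | ⟨i, -⟩ <;> simp

lemma layeredGraph_self_iff (hloop : ∀ i x, ¬ E i x x) {v : X × Fin (n + 1)} :
    LayeredGraph E v v ↔ v.2 = 0 := by
  refine ⟨fun h => ?_, fun h => ?_⟩
  · have key : ∀ p q, LayeredGraph E p q → p = q → p.2 = 0 := by
      rintro p q (x | ⟨x, i⟩ | ⟨i, hE⟩) hpq
      · rfl
      · exact absurd (congrArg Prod.snd hpq) (Fin.castSucc_lt_succ (i := i)).ne
      · obtain rfl : _ = _ := congrArg Prod.fst hpq
        exact absurd hE (hloop i _)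
    exact key v v h rfl
  · obtain ⟨x, k⟩ := v
    obtain rfl : k = 0 := h
    exact .loop x

lemma edge_iff_layeredGraph_and_ne (hloop : ∀ i x, ¬ E i x x) (i : Fin n) (x y : X) :
    E i x y ↔ LayeredGraph E (x, i.castSucc) (y, i.castSucc) ∧ x ≠ y := by
  refine ⟨fun h => ⟨.layer i h, fun hxy => hloop i x (hxy ▸ h)⟩, fun ⟨h, hxy⟩ => ?_⟩
  generalize hp : (x, i.castSucc) = p at h
  generalize hq : (y, i.castSucc) = q at h
  rcases h with z | ⟨z, j⟩ | ⟨j, hE⟩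
  · simp only [Prod.mk.injEq] at hp hq
    exact absurd (hp.1.trans hq.1.symm) hxy
  · simp only [Prod.mk.injEq] at hp hq
    exact absurd (hp.2.symm.trans hq.2) (Fin.castSucc_lt_succ (i := j)).ne
  · simp only [Prod.mk.injEq, Fin.castSucc_inj] at hp hq
    obtain ⟨rfl, rfl⟩ := hp
    obtain ⟨rfl, -⟩ := hq
    exact hE

lemma snd_apply_of_mem_dirAut_layeredGraph (hloop : ∀ i x, ¬ E i x x)
    {Φ : Equiv.Perm (X × Fin (n + 1))} (hΦ : Φ ∈ dirAut (LayeredGraph E)) (v : X × Fin (n + 1)) :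
    (Φ v).2 = v.2 := by
  obtain ⟨x, k⟩ := v
  induction k using Fin.induction generalizing Φ x with
  | zero => exact (layeredGraph_self_iff hloop).1 ((hΦ _ _).1 (.loop x))
  | succ i ih =>
    have hi : (Φ (x, i.castSucc)).2 = i.castSucc := ih hΦ x
    rcases ((hΦ _ _).1 (.rung x i)).snd_eq_or with h | ⟨-, h⟩
    · -- `Φ⁻¹` would map the layer-`i` vertex `Φ (x, i + 1)` back to layer `i + 1`
      have hw : ((Φ (x, i.succ)).1, i.castSucc) = Φ (x, i.succ) := Prod.ext rfl (h.trans hi).symm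
      have := ih ((dirAut _).inv_mem hΦ) (Φ (x, i.succ)).1
      rw [hw, coe_inv, Equiv.symm_apply_apply] at this
      exact absurd (this.trans (h.trans hi)) (Fin.castSucc_lt_succ (i := i)).ne'
    · exact Fin.ext (by simp [h, hi])

lemma apply_of_mem_dirAut_layeredGraph (hloop : ∀ i x, ¬ E i x x)
    {Φ : Equiv.Perm (X × Fin (n + 1))} (hΦ : Φ ∈ dirAut (LayeredGraph E)) (x : X)
    (k : Fin (n + 1)) : Φ (x, k) = ((Φ (x, 0)).1, k) := by
  induction k using Fin.induction with
  | zero => exact Prod.ext rfl (snd_apply_of_mem_dirAut_layeredGraph hloop hΦ _)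
  | succ i ih =>
    have hsnd := snd_apply_of_mem_dirAut_layeredGraph hloop hΦ
    rcases ((hΦ _ _).1 (.rung x i)).snd_eq_or with h | ⟨h, -⟩
    · rw [hsnd, hsnd] at h
      exact absurd h (Fin.castSucc_lt_succ (i := i)).ne'
    · exact Prod.ext (by rw [h, ih]) (hsnd _)

lemma layeredGraph_prodCongrLeftHom {σ : Equiv.Perm X} (hσ : σ ∈ ⨅ i, dirAut (E i))
    {p q : X × Fin (n + 1)} (h : LayeredGraph E p q) :
    LayeredGraph E (prodCongrLeftHom _ σ p) (prodCongrLeftHom _ σ q) := by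
  rcases h with x | ⟨x, i⟩ | ⟨i, hE⟩ <;> simp only [prodCongrLeftHom_apply]
  · exact .loop _
  · exact .rung _ _
  · exact .layer i ((Subgroup.mem_iInf.1 hσ i _ _).1 hE)

lemma prodCongrLeftHom_mem_dirAut_layeredGraph_iff (hloop : ∀ i x, ¬ E i x x)
    (σ : Equiv.Perm X) :
    prodCongrLeftHom _ σ ∈ dirAut (LayeredGraph E) ↔ σ ∈ ⨅ i, dirAut (E i) := by
  refine ⟨fun h => Subgroup.mem_iInf.2 fun i x y => ?_, fun hσ => ?_⟩
  · rw [edge_iff_layeredGraph_and_ne hloop, edge_iff_layeredGraph_and_ne hloop,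
      σ.injective.ne_iff]
    exact and_congr_left' (h _ _)
  · refine mem_dirAut_of_map_edge (fun _ _ => layeredGraph_prodCongrLeftHom hσ) ?_
    rw [← map_inv]
    exact fun _ _ => layeredGraph_prodCongrLeftHom (inv_mem hσ)

lemma map_prodCongrLeftHom_iInf_dirAut (hloop : ∀ i x, ¬ E i x x) :
    (⨅ i, dirAut (E i)).map (prodCongrLeftHom _) = dirAut (LayeredGraph E) := by
  ext Φ
  refine ⟨?_, fun hΦ => ?_⟩
  · rintro ⟨σ, hσ, rfl⟩
    exact (prodCongrLeftHom_mem_dirAut_layeredGraph_iff hloop σ).2 hσ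
  · obtain ⟨σ, rfl⟩ := mem_range_prodCongrLeftHom (apply_of_mem_dirAut_layeredGraph hloop hΦ)
    exact ⟨σ, (prodCongrLeftHom_mem_dirAut_layeredGraph_iff hloop σ).1 hΦ, rfl⟩

end LayeredGraph

theorem stmt5_general (n : ℕ) (X : Type*)
    (E : Fin n → X → X → Prop)
    (hloop : ∀ i x, ¬ E i x x) :
    ∃ E' : X × Fin (n + 1) → X × Fin (n + 1) → Prop,
      Nonempty (↥(dirAut E') ≃* ↥(⨅ i : Fin n, dirAut (E i))) :=
  ⟨LayeredGraph E, ⟨(MulEquiv.subgroupCongr (map_prodCongrLeftHom_iInf_dirAut hloop).symm).trans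
    ((⨅ i, dirAut (E i)).equivMapOfInjective _ Equiv.Perm.prodCongrLeftHom_injective).symm⟩⟩

/-- Given directed loopless `d_i`-regular graphs `𝒢_i` (`i = 1,…,n`) on a
common vertex set `X` of size `N`, with `d_1 ≤ ⋯ ≤ d_n`, there is a directed graph on
`X × {0,…,n}` whose automorphism group is isomorphic to `⋂ᵢ Aut(𝒢_i)`. -/
theorem stmt5 (N n : ℕ) (X : Type*) [Fintype X] (hX : Fintype.card X = N)
    (E : Fin n → X → X → Prop)
    (hloop : ∀ i x, ¬ E i x x)
    (d : Fin n → ℕ)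
    (hreg : ∀ i v, Nat.card {w : X // E i v w} = d i ∧ Nat.card {w : X // E i w v} = d i)
    (hmono : ∀ i j : Fin n, i ≤ j → d i ≤ d j) :
    ∃ E' : X × Fin (n + 1) → X × Fin (n + 1) → Prop,
      Nonempty (↥(dirAut E') ≃* ↥(⨅ i : Fin n, dirAut (E i))) :=
  stmt5_general n X E hloop
end

section
/- Every finite group G is isomorphic to the automorphism group of some finite simple undirected graph (Frucht's theorem). -/
open Function

namespace SimpleGraph

variable {V W : Type*} {Gr : SimpleGraph V} {Gr' : SimpleGraph W}

def isoMulEquivDirAut (Gr : SimpleGraph V) : (Gr ≃g Gr) ≃* dirAut Gr.Adj where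
  toFun e := ⟨e.toEquiv, fun _ _ => e.map_adj_iff.symm⟩
  invFun φ := ⟨φ.1, (φ.2 _ _).symm⟩
  left_inv _ := rfl
  right_inv _ := rfl
  map_mul' _ _ := rfl

theorem Iso.ncard_neighborSet (e : Gr ≃g Gr') (v : V) :
    (Gr'.neighborSet (e v)).ncard = (Gr.neighborSet v).ncard := by
  rw [← e.image_neighborSet, Set.ncard_image_of_injective _ e.injective]

def IsPendantPath (Gr : SimpleGraph V) (x : ℕ → V) (L : ℕ) : Prop :=
  Set.InjOn x (Set.Iic L) ∧
    ∀ i, 0 < i → i ≤ L → ∀ w, Gr.Adj (x i) w ↔ w = x (i - 1) ∨ i < L ∧ w = x (i + 1)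

namespace IsPendantPath

variable {x : ℕ → V} {y : ℕ → W} {L L' : ℕ}

theorem adj_succ (hx : Gr.IsPendantPath x L) {i : ℕ} (hi : i < L) :
    Gr.Adj (x i) (x (i + 1)) :=
  ((hx.2 (i + 1) i.succ_pos hi _).2 (Or.inl rfl)).symm

theorem succ_ne_pred (hx : Gr.IsPendantPath x L) {i : ℕ} (hi : i < L) :
    x (i + 1) ≠ x (i - 1) := fun h =>
  absurd (hx.1 (Set.mem_Iic.2 hi) (Set.mem_Iic.2 (by omega)) h) (by omega)

theorem hom_apply_eq (hx : Gr.IsPendantPath x L) (hy : Gr'.IsPendantPath y L') (f : Gr →g Gr')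
    (hf : Injective f) (h0 : f (x 0) = y 0) (h1 : f (x 1) = y 1) :
    ∀ i ≤ min L L', f (x i) = y i
  | 0, _ => h0
  | 1, _ => h1
  | i + 2, hi => by
    have hadj := f.map_adj (hx.adj_succ (i := i + 1) (by omega))
    rw [hom_apply_eq hx hy f hf h0 h1 (i + 1) (by omega)] at hadj
    rcases (hy.2 (i + 1) (by omega) (by omega) _).1 hadj with h | ⟨_, h⟩
    · rw [Nat.add_sub_cancel, ← hom_apply_eq hx hy f hf h0 h1 i (by omega)] at h
      exact absurd (hf h) (hx.succ_ne_pred (i := i + 1) (by omega))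
    · exact h

theorem le_of_hom (hx : Gr.IsPendantPath x L) (hy : Gr'.IsPendantPath y L') (f : Gr →g Gr')
    (hf : Injective f) (h0 : f (x 0) = y 0) (h1 : f (x 1) = y 1) (hL' : 0 < L') : L ≤ L' := by
  by_contra! h
  have hadj := f.map_adj (hx.adj_succ h)
  rw [hx.hom_apply_eq hy f hf h0 h1 L' (by omega)] at hadj
  rcases (hy.2 L' hL' le_rfl _).1 hadj with h' | ⟨h', _⟩
  · rw [← hx.hom_apply_eq hy f hf h0 h1 (L' - 1) (by omega)] at h'
    exact hx.succ_ne_pred h (hf h')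
  · exact lt_irrefl _ h'

theorem iso_apply_eq (hx : Gr.IsPendantPath x L) (hy : Gr'.IsPendantPath y L') (e : Gr ≃g Gr')
    (h0 : e (x 0) = y 0) (h1 : e (x 1) = y 1) (hL : 0 < L) (hL' : 0 < L') :
    L = L' ∧ ∀ i ≤ L, e (x i) = y i := by
  have h0' : e.symm (y 0) = x 0 := by rw [← h0, e.symm_apply_apply]
  have h1' : e.symm (y 1) = x 1 := by rw [← h1, e.symm_apply_apply]
  have hle := hx.le_of_hom hy e.toHom e.injective h0 h1 hL'
  have hge := hy.le_of_hom hx e.symm.toHom e.symm.injective h0' h1' hL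
  obtain rfl : L = L' := le_antisymm hle hge
  exact ⟨rfl, fun i hi => hx.hom_apply_eq hy e.toHom e.injective h0 h1 i (by simpa using hi)⟩

end IsPendantPath

end SimpleGraph

namespace Frucht

open SimpleGraph

inductive Node (G : Type*) (m : ℕ)
  | base (g : G)
  | arm (g : G) (c : Fin m) (b : Bool) (i : ℕ)

variable {G : Type*} {m : ℕ}

def armLength (c : Fin m) (b : Bool) : ℕ := 2 * c + 1 + b.toNat

theorem armLength_pos {c : Fin m} {b : Bool} : 0 < armLength c b := by
  unfold armLength; omega

theorem armLength_injective {c c' : Fin m} {b b' : Bool} (h : armLength c b = armLength c' b') :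
    c = c' ∧ b = b' := by
  unfold armLength at h
  cases b <;> cases b' <;> simp only [Bool.toNat_true, Bool.toNat_false] at h <;>
    first | omega | exact ⟨Fin.ext (by omega), rfl⟩

def Node.IsValid : Node G m → Prop
  | base _ => True
  | arm _ c b i => i ≤ armLength c b

abbrev Vertex (G : Type*) (m : ℕ) : Type _ := {v : Node G m // v.IsValid}

instance [Finite G] : Finite (Vertex G m) := by
  let F : G ⊕ (G × Fin m × Bool × Fin (2 * m + 2)) → Node G m :=
    Sum.elim .base fun ⟨g, c, b, i⟩ => .arm g c b i
  have hF : {v : Node G m | v.IsValid} ⊆ Set.range F := by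
    rintro (g | ⟨g, c, b, i⟩) hv
    · exact ⟨.inl g, rfl⟩
    · refine ⟨.inr (g, c, b, ⟨i, ?_⟩), rfl⟩
      have := c.2
      have := b.toNat_le
      have : i ≤ armLength c b := hv
      unfold armLength at this
      omega
  exact ((Set.finite_range F).subset hF).to_subtype

def Vertex.base (g : G) : Vertex G m := ⟨.base g, trivial⟩

/-- Index `0` is the hub; beyond `armLength c b` the index is clamped to the end of the arm. -/
def Vertex.arm (g : G) (c : Fin m) (b : Bool) (i : ℕ) : Vertex G m :=
  ⟨.arm g c b (min i (armLength c b)), min_le_right _ _⟩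

theorem Vertex.val_arm {g : G} {c : Fin m} {b : Bool} {i : ℕ} (hi : i ≤ armLength c b) :
    (Vertex.arm g c b i).1 = .arm g c b i := by
  simp [Vertex.arm, hi]

theorem Vertex.eq_base_or_arm (v : Vertex G m) :
    (∃ g, v = .base g) ∨ ∃ g c b i, i ≤ armLength c b ∧ v = .arm g c b i := by
  obtain ⟨g | ⟨g, c, b, i⟩, hv⟩ := v
  · exact .inl ⟨g, rfl⟩
  · exact .inr ⟨g, c, b, i, hv, Subtype.ext (Vertex.val_arm hv).symm⟩

variable [Group G]

/-- The arc `g → g * σ c` becomes the path `g — arm g c false 0 — arm g c true 0 — g * σ c`. -/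
inductive Step (σ : Fin m → G) : Node G m → Node G m → Prop
  | attach (g : G) (c : Fin m) (b : Bool) : Step σ (.arm g c b 0) (.base (cond b (g * σ c) g))
  | bridge (g : G) (c : Fin m) : Step σ (.arm g c false 0) (.arm g c true 0)
  | along (g : G) (c : Fin m) (b : Bool) (i : ℕ) : Step σ (.arm g c b i) (.arm g c b (i + 1))

def graph (σ : Fin m → G) : SimpleGraph (Vertex G m) :=
  SimpleGraph.fromRel fun v w => Step σ v.1 w.1

variable {σ : Fin m → G}

theorem adj_hub_iff {g : G} {c : Fin m} {b : Bool} {w : Vertex G m} :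
    (graph σ).Adj (.arm g c b 0) w ↔
      w = .base (cond b (g * σ c) g) ∨ w = .arm g c (!b) 0 ∨ w = .arm g c b 1 := by
  obtain ⟨w, hw⟩ := w
  simp only [graph, fromRel_adj, ne_eq, Subtype.ext_iff, Vertex.val_arm (Nat.zero_le _),
    Vertex.val_arm (i := 1) armLength_pos, Vertex.base]
  constructor
  · rintro ⟨-, h | h⟩ <;> cases h <;> simp
  · rintro (rfl | rfl | rfl)
    · exact ⟨by simp, .inl (.attach g c b)⟩
    · cases b
      · exact ⟨by simp, .inl (.bridge g c)⟩
      · exact ⟨by simp, .inr (.bridge g c)⟩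
    · exact ⟨by simp, .inl (.along g c b 0)⟩

theorem hub_adj_base_iff {g x : G} {c : Fin m} {b : Bool} :
    (graph σ).Adj (.arm g c b 0) (.base x) ↔ x = cond b (g * σ c) g := by
  rw [adj_hub_iff]
  simp [Vertex.base, Vertex.arm, Subtype.ext_iff]

theorem hub_adj_hub_iff {g g' : G} {c : Fin m} :
    (graph σ).Adj (.arm g c false 0) (.arm g' c true 0) ↔ g' = g := by
  rw [adj_hub_iff]
  simp [Vertex.base, Vertex.arm, Subtype.ext_iff]

theorem isPendantPath_arm (g : G) (c : Fin m) (b : Bool) :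
    (graph σ).IsPendantPath (Vertex.arm g c b) (armLength c b) := by
  refine ⟨fun i hi j hj h => ?_, fun i hi hiL w => ?_⟩
  · simpa [Vertex.arm, Set.mem_Iic.1 hi, Set.mem_Iic.1 hj] using h
  obtain ⟨w, hw⟩ := w
  have hpred : i - 1 ≤ armLength c b := by omega
  simp only [graph, fromRel_adj, ne_eq, Subtype.ext_iff, Vertex.val_arm (g := g) hiL,
    Vertex.val_arm (g := g) hpred]
  constructor
  · rintro ⟨-, h | h⟩
    · cases h with
      | attach => omega
      | bridge => omega
      | along => exact .inr ⟨hw, by rw [Vertex.val_arm hw]⟩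
    · cases h with
      | bridge => omega
      | along => simp
  · rintro (h | ⟨hlt, h⟩)
    · subst h
      obtain ⟨j, rfl⟩ := Nat.exists_eq_add_of_lt hi
      exact ⟨by simp, .inr (by simpa using .along g c b j)⟩
    · rw [Vertex.val_arm hlt] at h
      subst h
      exact ⟨by simp, .inl (.along g c b i)⟩

theorem ncard_neighborSet_hub (g : G) (c : Fin m) (b : Bool) :
    ((graph σ).neighborSet (.arm g c b 0)).ncard = 3 := by
  have h1 := Vertex.val_arm (g := g) (c := c) (b := b) (i := 1) armLength_pos
  refine Set.ncard_eq_three.2 ⟨_, _, _, ?_, ?_, ?_, Set.ext fun w => adj_hub_iff⟩ <;>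
    simp [Subtype.ext_iff, Vertex.base, Vertex.val_arm, h1]

theorem ncard_neighborSet_arm_le {g : G} {c : Fin m} {b : Bool} {i : ℕ} (hi : 0 < i)
    (hiL : i ≤ armLength c b) : ((graph σ).neighborSet (.arm g c b i)).ncard ≤ 2 := by
  have hsub : (graph σ).neighborSet (.arm g c b i) ⊆ {.arm g c b (i - 1), .arm g c b (i + 1)} :=
    fun w hw => by
      rcases ((isPendantPath_arm g c b).2 i hi hiL w).1 hw with h | ⟨-, h⟩ <;> simp [h]
  calc _ ≤ ({.arm g c b (i - 1), .arm g c b (i + 1)} : Set (Vertex G m)).ncard :=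
        Set.ncard_le_ncard hsub (Set.toFinite _)
    _ ≤ _ := (Set.ncard_insert_le _ _).trans (by simp)

theorem four_le_ncard_neighborSet_base [Finite G] (hm : 2 ≤ m) (g : G) :
    4 ≤ ((graph σ).neighborSet (.base g)).ncard := by
  let F : Fin m × Bool → Vertex G m := fun p => .arm (cond p.2 (g * (σ p.1)⁻¹) g) p.1 p.2 0
  have hF : Injective F := fun p q h => by
    obtain ⟨-, hc, hb, -⟩ := Node.arm.inj (congrArg Subtype.val h)
    exact Prod.ext hc hb
  have hsub : Set.range F ⊆ (graph σ).neighborSet (.base g) := by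
    rintro _ ⟨⟨c, b⟩, rfl⟩
    exact ((adj_hub_iff).2 (.inl (by cases b <;> simp))).symm
  calc 4 ≤ Nat.card (Fin m × Bool) := by simp; omega
    _ = (Set.range F).ncard := (Set.ncard_range_of_injective hF).symm
    _ ≤ _ := Set.ncard_le_ncard hsub

theorem exists_eq_base_of_four_le {v : Vertex G m}
    (hv : 4 ≤ ((graph σ).neighborSet v).ncard) : ∃ g, v = .base g := by
  obtain hbase | ⟨g, c, b, i, hi, rfl⟩ := v.eq_base_or_arm
  · exact hbase
  rcases Nat.eq_zero_or_pos i with rfl | hpos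
  · rw [ncard_neighborSet_hub] at hv; omega
  · have := ncard_neighborSet_arm_le (σ := σ) (g := g) hpos hi; omega

theorem exists_eq_hub_of_ncard_eq_three [Finite G] (hm : 2 ≤ m) {v : Vertex G m}
    (hv : ((graph σ).neighborSet v).ncard = 3) : ∃ g c b, v = .arm g c b 0 := by
  obtain ⟨g, rfl⟩ | ⟨g, c, b, i, hi, rfl⟩ := v.eq_base_or_arm
  · have := four_le_ncard_neighborSet_base (σ := σ) hm g; omega
  rcases Nat.eq_zero_or_pos i with rfl | hpos
  · exact ⟨g, c, b, rfl⟩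
  · have := ncard_neighborSet_arm_le (σ := σ) (g := g) hpos hi; omega

instance : SMul G (Node G m) where
  smul a
    | .base g => .base (a * g)
    | .arm g c b i => .arm (a * g) c b i

@[simp] theorem Node.smul_base (a g : G) : a • (Node.base g : Node G m) = .base (a * g) := rfl

@[simp] theorem Node.smul_arm (a g : G) (c : Fin m) (b : Bool) (i : ℕ) :
    a • Node.arm g c b i = .arm (a * g) c b i := rfl

instance : MulAction G (Node G m) where
  one_smul v := by cases v <;> simp
  mul_smul a a' v := by cases v <;> simp [mul_assoc]

theorem Node.isValid_smul (a : G) (v : Node G m) : (a • v).IsValid ↔ v.IsValid := by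
  cases v <;> exact Iff.rfl

instance : MulAction G (Vertex G m) where
  smul a v := ⟨a • v.1, (v.1.isValid_smul a).2 v.2⟩
  one_smul v := Subtype.ext (one_smul G v.1)
  mul_smul a a' v := Subtype.ext (mul_smul a a' v.1)

@[simp] theorem Vertex.val_smul (a : G) (v : Vertex G m) : (a • v).1 = a • v.1 := rfl

theorem Step.smul {v w : Node G m} (h : Step σ v w) (a : G) : Step σ (a • v) (a • w) := by
  cases h with
  | attach g c b =>
    have : a • Node.base (cond b (g * σ c) g) =
        (.base (cond b (a * g * σ c) (a * g)) : Node G m) := by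
      cases b <;> simp [mul_assoc]
    rw [this]
    exact .attach (a * g) c b
  | bridge g c => exact .bridge (a * g) c
  | along g c b i => exact .along (a * g) c b i

theorem step_smul_iff {v w : Node G m} (a : G) : Step σ (a • v) (a • w) ↔ Step σ v w :=
  ⟨fun h => by simpa using h.smul a⁻¹, fun h => h.smul a⟩

variable (σ) in
def translate : G →* (graph σ ≃g graph σ) where
  toFun a :=
    { MulAction.toPerm a with
      map_rel_iff' := by simp [graph, fromRel_adj, step_smul_iff] }
  map_one' := RelIso.ext (one_smul G)
  map_mul' a a' := RelIso.ext (mul_smul a a')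

@[simp] theorem translate_apply (a : G) (v : Vertex G m) : translate σ a v = a • v := rfl

theorem translate_injective : Injective (translate σ) := by
  refine (injective_iff_map_eq_one _).2 fun a ha => ?_
  simpa [Vertex.base] using congrArg Subtype.val (RelIso.ext_iff.1 ha (Vertex.base 1))

section Rigidity

variable [Finite G] (hm : 2 ≤ m) (e : graph σ ≃g graph σ)
include hm

theorem exists_apply_base_eq (g : G) : ∃ g', e (.base g) = .base g' :=
  exists_eq_base_of_four_le (by rw [e.ncard_neighborSet]; exact four_le_ncard_neighborSet_base hm g)

theorem exists_apply_arm_eq (g : G) (c : Fin m) (b : Bool) :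
    ∃ g', ∀ i ≤ armLength c b, e (.arm g c b i) = .arm g' c b i := by
  obtain ⟨g', c', b', h0⟩ := exists_eq_hub_of_ncard_eq_three hm (v := e (.arm g c b 0))
    (by rw [e.ncard_neighborSet, ncard_neighborSet_hub])
  have h1 : e (.arm g c b 1) = .arm g' c' b' 1 := by
    have hadj := e.map_adj_iff.2 ((isPendantPath_arm g c b).adj_succ armLength_pos)
    have hdeg := ncard_neighborSet_arm_le (σ := σ) (g := g) (c := c) (b := b) Nat.one_pos
      armLength_pos
    rw [← e.ncard_neighborSet] at hdeg
    rw [h0] at hadj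
    rcases adj_hub_iff.1 hadj with h | h | h
    · have := four_le_ncard_neighborSet_base (σ := σ) hm (cond b' (g' * σ c') g')
      rw [h] at hdeg; omega
    · rw [h, ncard_neighborSet_hub] at hdeg; omega
    · exact h
  obtain ⟨hlen, heq⟩ := (isPendantPath_arm g c b).iso_apply_eq (isPendantPath_arm g' c' b') e
    h0 h1 armLength_pos armLength_pos
  obtain ⟨rfl, rfl⟩ := armLength_injective hlen
  exact ⟨g', heq⟩

theorem apply_arm_eq_of_apply_base_eq {g g' : G} (hg : e (.base g) = .base g') (c : Fin m)
    (b : Bool) : ∀ i ≤ armLength c b, e (.arm g c b i) = .arm g' c b i := by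
  obtain ⟨h₀, hh₀⟩ := exists_apply_arm_eq hm e g c false
  obtain ⟨h₁, hh₁⟩ := exists_apply_arm_eq hm e g c true
  have e₀ : h₀ = g' := by
    have := e.map_adj_iff.2 (hub_adj_base_iff.2 rfl : (graph σ).Adj (.arm g c false 0) (.base g))
    rwa [hh₀ 0 (Nat.zero_le _), hg, hub_adj_base_iff, eq_comm] at this
  have e₁ : h₁ = g' := by
    have := e.map_adj_iff.2 (hub_adj_hub_iff.2 rfl :
      (graph σ).Adj (.arm g c false 0) (.arm g c true 0))
    rwa [hh₀ 0 (Nat.zero_le _), hh₁ 0 (Nat.zero_le _), hub_adj_hub_iff, e₀] at this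
  cases b
  · exact e₀ ▸ hh₀
  · exact e₁ ▸ hh₁

theorem apply_base_mul_eq {g g' : G} (hg : e (.base g) = .base g') (c : Fin m) :
    e (.base (g * σ c)) = .base (g' * σ c) := by
  obtain ⟨x, hx⟩ := exists_apply_base_eq hm e (g * σ c)
  have := e.map_adj_iff.2 (hub_adj_base_iff.2 rfl :
    (graph σ).Adj (.arm g c true 0) (.base (g * σ c)))
  rw [apply_arm_eq_of_apply_base_eq hm e hg c true 0 (Nat.zero_le _), hx, hub_adj_base_iff] at this
  rw [hx, this, cond_true]

end Rigidity

theorem translate_surjective [Finite G] (hσ : Surjective σ) (hm : 2 ≤ m) :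
    Surjective (translate σ) := by
  intro e
  obtain ⟨a, ha⟩ := exists_apply_base_eq hm e 1
  have hbase : ∀ g, e (.base g) = .base (a * g) := by
    intro g
    obtain ⟨c, rfl⟩ := hσ g
    simpa using apply_base_mul_eq hm e ha c
  refine ⟨a, RelIso.ext fun v => ?_⟩
  obtain ⟨g, rfl⟩ | ⟨g, c, b, i, hi, rfl⟩ := v.eq_base_or_arm
  · exact (hbase g).symm
  · exact (apply_arm_eq_of_apply_base_eq hm e (hbase g) c b i hi).symm

end Frucht

/-- Frucht's theorem: every finite group is isomorphic to the automorphism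
group of some finite simple undirected graph. -/
theorem stmt7 (G : Type) [Group G] [Fintype G] :
    ∃ (V : Type) (_ : Fintype V) (Gr : SimpleGraph V),
      Nonempty (G ≃* ↥(dirAut Gr.Adj)) := by
  -- the identity is added as an extra colour so that `2 ≤ m` also for the trivial group
  let σ : Fin (Fintype.card G + 1) → G := Fin.cons 1 (Fintype.equivFin G).symm
  have hσ : Surjective σ := fun g => ⟨(Fintype.equivFin G g).succ, by simp [σ]⟩
  have hm : 2 ≤ Fintype.card G + 1 := Nat.succ_le_succ Fintype.card_pos
  exact ⟨_, Fintype.ofFinite _, Frucht.graph σ, ⟨(MulEquiv.ofBijective _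
    ⟨Frucht.translate_injective, Frucht.translate_surjective hσ hm⟩).trans
    (SimpleGraph.isoMulEquivDirAut _)⟩⟩
end

section
/- Let 𝕏 be a finite quantum set with quantum adjacency matrices A_i (i = 1,…,n) such that the quantum graphs (𝕏, A_i) are loopless (A_i • I = 0). Let B be the adjacency matrix of a simple graph on {0,…,n} and P_i the coordinate projections on ℂ^{n+1}. Then A' := I ⊗ B + Σ_{i=1}^n A_i ⊗ P_i satisfies A' • A' = A', A' = conj(A'), and A' • I = 0, i.e., A' is the adjacency matrix of a loopless quantum graph on 𝕏 × {0,…,n}. -/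
/-!
Write `A' = Σ_o C_o ⊗ M_o` over `o ∈ {none} ∪ {1,…,n}`, with `(C, M) = (I, B)` for `none` and
`(A_i, P_i)` otherwise. The Schur product factorizes as `(C ⊗ M) • (D ⊗ N) = (C • D) ⊗ (M ⊙ N)`
with `⊙` the Hadamard product, and `B, P_1, …, P_n` are 0/1 matrices with pairwise disjoint
supports (`B` has zero diagonal), i.e. Hadamard-orthogonal idempotents. Hence in `A' • A'` only
the terms `(C_o • C_o) ⊗ M_o = C_o ⊗ M_o` survive. Likewise `A' • (I ⊗ 1)` vanishes termwise since
`B ⊙ 1 = 0` and `A_i • I = 0`, and `conj (C ⊗ M) = conj C ⊗ M̄` with `M̄ = M` for 0/1 matrices.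
-/

open TensorProduct

/-- The Schur product of two operators: `A • B = m (A ⊗ B) m*`, where `δ = m*`. -/
noncomputable def schur {V : Type*} [AddCommGroup V] [Module ℂ V]
    (m : V ⊗[ℂ] V →ₗ[ℂ] V) (δ : V →ₗ[ℂ] V ⊗[ℂ] V) (A C : V →ₗ[ℂ] V) : V →ₗ[ℂ] V :=
  m ∘ₗ (TensorProduct.map A C) ∘ₗ δ

/-- The complex conjugate of an operator: `conj(A) f = (A (f*))*`. -/
def conjOp {V : Type*} [AddCommGroup V] [Module ℂ V] [StarAddMonoid V] [StarModule ℂ V]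
    (A : V →ₗ[ℂ] V) : V →ₗ[ℂ] V where
  toFun f := star (A (star f))
  map_add' x y := by simp
  map_smul' c x := by simp [star_smul]

/-- The operator `C ⊗ M` on `C(𝕏) ⊗ ℂ^k ≅ (Fin k → C(𝕏))`, for `C` an operator on
`C(𝕏)` and `M` a `k × k` scalar matrix. -/
def tensOp {B : Type*} [AddCommGroup B] [Module ℂ B] {k : ℕ}
    (C : B →ₗ[ℂ] B) (M : Matrix (Fin k) (Fin k) ℂ) : (Fin k → B) →ₗ[ℂ] (Fin k → B) where
  toFun f := fun j => ∑ i, M j i • C (f i)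
  map_add' f g := by
    funext j
    simp [map_add, smul_add, Finset.sum_add_distrib]
  map_smul' c f := by
    funext j
    simp only [Pi.smul_apply, map_smul, Finset.smul_sum, RingHom.id_apply]
    exact Finset.sum_congr rfl fun i _ => smul_comm _ _ _

/-- The comultiplication `m*` of the quantum set `𝕏 × {0,…,k-1}`, whose function algebra
is `Fin k → C(𝕏)`, induced by the comultiplication `δ` of `C(𝕏)`. -/
noncomputable def piComul {B : Type*} [AddCommGroup B] [Module ℂ B]
    (δ : B →ₗ[ℂ] B ⊗[ℂ] B) (k : ℕ) :
    (Fin k → B) →ₗ[ℂ] (Fin k → B) ⊗[ℂ] (Fin k → B) :=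
  ∑ i : Fin k,
    (TensorProduct.map (LinearMap.single ℂ (fun _ : Fin k => B) i)
        (LinearMap.single ℂ (fun _ : Fin k => B) i)) ∘ₗ δ ∘ₗ (LinearMap.proj i)

open scoped Matrix

section Schur

variable {V : Type*} [AddCommGroup V] [Module ℂ V]

noncomputable def schurBilin (m : V ⊗[ℂ] V →ₗ[ℂ] V) (δ : V →ₗ[ℂ] V ⊗[ℂ] V) :
    (V →ₗ[ℂ] V) →ₗ[ℂ] (V →ₗ[ℂ] V) →ₗ[ℂ] (V →ₗ[ℂ] V) :=
  (TensorProduct.mapBilinear (RingHom.id ℂ) V V V V).compr₂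
    (LinearMap.llcomp ℂ V (V ⊗[ℂ] V) V m ∘ₗ LinearMap.lcomp ℂ (V ⊗[ℂ] V) δ)

theorem schur_eq_schurBilin (m : V ⊗[ℂ] V →ₗ[ℂ] V) (δ : V →ₗ[ℂ] V ⊗[ℂ] V)
    (A C : V →ₗ[ℂ] V) : schur m δ A C = schurBilin m δ A C := rfl

theorem schur_sum_sum (m : V ⊗[ℂ] V →ₗ[ℂ] V) (δ : V →ₗ[ℂ] V ⊗[ℂ] V) {ι κ : Type*}
    (s : Finset ι) (t : Finset κ) (F : ι → V →ₗ[ℂ] V) (G : κ → V →ₗ[ℂ] V) :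
    schur m δ (∑ i ∈ s, F i) (∑ j ∈ t, G j) =
      ∑ i ∈ s, ∑ j ∈ t, schur m δ (F i) (G j) := by
  simp only [schur_eq_schurBilin, map_sum, LinearMap.sum_apply]
  exact Finset.sum_comm

theorem schur_sum_left (m : V ⊗[ℂ] V →ₗ[ℂ] V) (δ : V →ₗ[ℂ] V ⊗[ℂ] V)
    {ι : Type*} (s : Finset ι) (F : ι → V →ₗ[ℂ] V) (C : V →ₗ[ℂ] V) :
    schur m δ (∑ i ∈ s, F i) C = ∑ i ∈ s, schur m δ (F i) C := by
  simp only [schur_eq_schurBilin, map_sum, LinearMap.sum_apply]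

theorem schur_id_id (m : V ⊗[ℂ] V →ₗ[ℂ] V) (δ : V →ₗ[ℂ] V ⊗[ℂ] V) :
    schur m δ LinearMap.id LinearMap.id = m ∘ₗ δ := by
  simp [schur, TensorProduct.map_id]

end Schur

theorem conjOp_sum {V : Type*} [AddCommGroup V] [Module ℂ V] [StarAddMonoid V]
    [StarModule ℂ V] {ι : Type*} (s : Finset ι) (F : ι → V →ₗ[ℂ] V) :
    conjOp (∑ i ∈ s, F i) = ∑ i ∈ s, conjOp (F i) := by
  ext v
  simp [conjOp, LinearMap.sum_apply, star_sum]

theorem conjOp_id {V : Type*} [AddCommGroup V] [Module ℂ V] [StarAddMonoid V]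
    [StarModule ℂ V] : conjOp (LinearMap.id : V →ₗ[ℂ] V) = LinearMap.id := by
  ext v
  simp [conjOp]

section TensOp

variable {B : Type*} [Ring B] [Algebra ℂ B] {k : ℕ}

theorem tensOp_apply (C : B →ₗ[ℂ] B) (M : Matrix (Fin k) (Fin k) ℂ) (f : Fin k → B)
    (j : Fin k) : tensOp C M f j = ∑ i, M j i • C (f i) := rfl

theorem tensOp_zero_left (M : Matrix (Fin k) (Fin k) ℂ) : tensOp (0 : B →ₗ[ℂ] B) M = 0 := by
  refine LinearMap.ext fun f ↦ funext fun j ↦ ?_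
  simp [tensOp_apply]

theorem tensOp_zero_right (C : B →ₗ[ℂ] B) :
    tensOp C (0 : Matrix (Fin k) (Fin k) ℂ) = 0 := by
  refine LinearMap.ext fun f ↦ funext fun j ↦ ?_
  simp [tensOp_apply]

theorem tensOp_id_one : tensOp (LinearMap.id : B →ₗ[ℂ] B) (1 : Matrix (Fin k) (Fin k) ℂ)
    = LinearMap.id := by
  refine LinearMap.ext fun f ↦ funext fun j ↦ ?_
  simp [tensOp_apply, Matrix.one_apply]

theorem mul'_map_tensOp_map_single (C D : B →ₗ[ℂ] B) (M N : Matrix (Fin k) (Fin k) ℂ)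
    (i j : Fin k) (t : B ⊗[ℂ] B) :
    LinearMap.mul' ℂ (Fin k → B) (map (tensOp C M) (tensOp D N)
      (map (LinearMap.single ℂ (fun _ ↦ B) i) (LinearMap.single ℂ (fun _ ↦ B) i) t)) j
    = (M j i * N j i) • LinearMap.mul' ℂ B (map C D t) := by
  induction t using TensorProduct.induction_on with
  | zero => simp
  | tmul x y =>
    simp [tensOp_apply, Pi.single_apply, apply_ite, smul_smul, mul_comm]
  | add s t hs ht => simp [hs, ht, smul_add]

theorem schur_tensOp (δ : B →ₗ[ℂ] B ⊗[ℂ] B) (C D : B →ₗ[ℂ] B)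
    (M N : Matrix (Fin k) (Fin k) ℂ) :
    schur (LinearMap.mul' ℂ (Fin k → B)) (piComul δ k) (tensOp C M) (tensOp D N)
    = tensOp (schur (LinearMap.mul' ℂ B) δ C D) (M ⊙ N) := by
  refine LinearMap.ext fun f ↦ funext fun j ↦ ?_
  simp only [schur, piComul, LinearMap.comp_apply, LinearMap.sum_apply, map_sum,
    Finset.sum_apply, LinearMap.proj_apply, tensOp_apply, mul'_map_tensOp_map_single,
    Matrix.hadamard_apply]

theorem conjOp_tensOp [StarRing B] [StarModule ℂ B] (C : B →ₗ[ℂ] B)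
    (M : Matrix (Fin k) (Fin k) ℂ) :
    conjOp (tensOp C M) = tensOp (conjOp C) (M.map star) := by
  refine LinearMap.ext fun f ↦ funext fun j ↦ ?_
  simp [conjOp, tensOp_apply, star_sum, star_smul]

end TensOp

section Family

variable {B : Type*} [Ring B] [Algebra ℂ B] {k : ℕ} {ι : Type*} [Fintype ι]
  (C : ι → B →ₗ[ℂ] B) (M : ι → Matrix (Fin k) (Fin k) ℂ)

theorem schur_sum_tensOp_self [DecidableEq ι] (δ : B →ₗ[ℂ] B ⊗[ℂ] B)
    (hC : ∀ i, schur (LinearMap.mul' ℂ B) δ (C i) (C i) = C i)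
    (hM : ∀ i j, M i ⊙ M j = if i = j then M i else 0) :
    schur (LinearMap.mul' ℂ (Fin k → B)) (piComul δ k)
      (∑ i, tensOp (C i) (M i)) (∑ i, tensOp (C i) (M i)) = ∑ i, tensOp (C i) (M i) := by
  rw [schur_sum_sum]
  refine Finset.sum_congr rfl fun i _ ↦ ?_
  simp only [schur_tensOp, hM, apply_ite, tensOp_zero_right, Finset.sum_ite_eq,
    Finset.mem_univ, if_true, hC]

theorem conjOp_sum_tensOp [StarRing B] [StarModule ℂ B] (hC : ∀ i, conjOp (C i) = C i)
    (hM : ∀ i, (M i).map star = M i) :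
    conjOp (∑ i, tensOp (C i) (M i)) = ∑ i, tensOp (C i) (M i) := by
  simp only [conjOp_sum, conjOp_tensOp, hC, hM]

theorem schur_sum_tensOp_id_eq_zero (δ : B →ₗ[ℂ] B ⊗[ℂ] B)
    (h : ∀ i, schur (LinearMap.mul' ℂ B) δ (C i) LinearMap.id = 0 ∨ (M i).diag = 0) :
    schur (LinearMap.mul' ℂ (Fin k → B)) (piComul δ k)
      (∑ i, tensOp (C i) (M i)) LinearMap.id = 0 := by
  rw [← tensOp_id_one, schur_sum_left]
  refine Finset.sum_eq_zero fun i _ ↦ ?_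
  rw [schur_tensOp, Matrix.hadamard_one]
  rcases h i with hC | hM
  · rw [hC, tensOp_zero_left]
  · simp [hM, tensOp_zero_right]

end Family

section Matrices

variable {κ α : Type*} [DecidableEq κ]

theorem Matrix.hadamard_single [MulZeroClass α] (M : Matrix κ κ α) (i j : κ) (c : α) :
    M ⊙ Matrix.single i j c = Matrix.single i j (M i j * c) := by
  ext a b
  simp only [Matrix.hadamard_apply, Matrix.single_apply]
  split_ifs with h
  · obtain ⟨rfl, rfl⟩ := h
    rfl
  · exact mul_zero _

def adjacencyBlocks [Zero α] [One α] {ι : Type*} (M : Matrix κ κ α) (e : ι → κ) :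
    Option ι → Matrix κ κ α
  | none => M
  | some i => Matrix.single (e i) (e i) 1

variable [CommSemiring α] {ι : Type*} {M : Matrix κ κ α} {e : ι → κ}

theorem adjacencyBlocks_apply_eq_zero_or_one (hM : ∀ a b, M a b = 0 ∨ M a b = 1)
    (o : Option ι) (a b : κ) :
    adjacencyBlocks M e o a b = 0 ∨ adjacencyBlocks M e o a b = 1 := by
  rcases o with _ | i
  · exact hM a b
  · simp only [adjacencyBlocks, Matrix.single_apply]
    split_ifs <;> simp

theorem adjacencyBlocks_hadamard [DecidableEq ι] (he : Function.Injective e)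
    (hM : ∀ a b, M a b = 0 ∨ M a b = 1) (hdiag : ∀ a, M a a = 0) (o o' : Option ι) :
    adjacencyBlocks M e o ⊙ adjacencyBlocks M e o' =
      if o = o' then adjacencyBlocks M e o else 0 := by
  rcases o with _ | i <;> rcases o' with _ | j
  · rw [if_pos rfl, Matrix.hadamard_self_eq_self_iff]
    intro a b
    rcases adjacencyBlocks_apply_eq_zero_or_one (e := e) hM none a b with h | h <;> rw [h]
    exacts [IsIdempotentElem.zero, IsIdempotentElem.one]
  · simp [adjacencyBlocks, Matrix.hadamard_single, hdiag]
  · simp [adjacencyBlocks, Matrix.hadamard_comm _ M, Matrix.hadamard_single, hdiag]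
  · by_cases hij : i = j
    · subst hij
      simp [adjacencyBlocks, Matrix.single_hadamard_single_eq]
    · simp [adjacencyBlocks, hij, Matrix.single_hadamard_single_of_ne, he.eq_iff]

theorem adjacencyBlocks_map_star [StarRing α] (hM : ∀ a b, M a b = 0 ∨ M a b = 1)
    (o : Option ι) :
    (adjacencyBlocks M e o).map star = adjacencyBlocks M e o := by
  ext a b
  rcases adjacencyBlocks_apply_eq_zero_or_one (e := e) hM o a b with h | h <;>
    simp [h]

end Matrices

theorem stmt9_general (n : ℕ) (B : Type*) [Ring B] [Algebra ℂ B] [StarRing B] [StarModule ℂ B]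
    (δ : B →ₗ[ℂ] B ⊗[ℂ] B)
    (hδ : (LinearMap.mul' ℂ B) ∘ₗ δ = LinearMap.id)
    (A : Fin n → (B →ₗ[ℂ] B))
    (hA : ∀ i, schur (LinearMap.mul' ℂ B) δ (A i) (A i) = A i)
    (hAreal : ∀ i, conjOp (A i) = A i)
    (hAloop : ∀ i, schur (LinearMap.mul' ℂ B) δ (A i) LinearMap.id = 0)
    (Bm : Matrix (Fin (n + 1)) (Fin (n + 1)) ℂ)
    (hBdiag : ∀ i, Bm i i = 0)
    (hB01 : ∀ i j, Bm i j = 0 ∨ Bm i j = 1) :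
    ∀ A' : (Fin (n + 1) → B) →ₗ[ℂ] (Fin (n + 1) → B),
      A' = tensOp LinearMap.id Bm +
        ∑ i : Fin n, tensOp (A i) (Matrix.single i.succ i.succ 1) →
      schur (LinearMap.mul' ℂ (Fin (n + 1) → B)) (piComul δ (n + 1)) A' A' = A' ∧
      conjOp A' = A' ∧
      schur (LinearMap.mul' ℂ (Fin (n + 1) → B)) (piComul δ (n + 1)) A' LinearMap.id = 0 := by
  intro A' hA'
  let C : Option (Fin n) → B →ₗ[ℂ] B := fun o ↦ o.elim LinearMap.id A
  have hA'_sum : A' = ∑ o, tensOp (C o) (adjacencyBlocks Bm Fin.succ o) :=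
    hA'.trans (Fintype.sum_option fun o ↦ tensOp (C o) (adjacencyBlocks Bm Fin.succ o)).symm
  subst hA'_sum
  refine ⟨schur_sum_tensOp_self _ _ _ ?_ ?_, conjOp_sum_tensOp _ _ ?_ ?_,
    schur_sum_tensOp_id_eq_zero _ _ _ ?_⟩
  · rintro (_ | i)
    exacts [(schur_id_id _ _).trans hδ, hA i]
  · exact adjacencyBlocks_hadamard (Fin.succ_injective n) hB01 hBdiag
  · rintro (_ | i)
    exacts [conjOp_id, hAreal i]
  · exact adjacencyBlocks_map_star hB01
  · rintro (_ | i)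
    exacts [Or.inr (funext hBdiag), Or.inl (hAloop i)]

/-- Given loopless quantum adjacency matrices `A_i` on a finite quantum set
`𝕏` and the adjacency matrix `Bm` of a simple graph on `{0,…,n}`, the operator
`A' = I ⊗ Bm + Σ_i A_i ⊗ P_i` is a real Schur idempotent with `A' • I = 0`, i.e. the
adjacency matrix of a loopless quantum graph on `𝕏 × {0,…,n}`. -/
theorem stmt9 (n : ℕ) (B : Type*) [Ring B] [Algebra ℂ B] [StarRing B] [StarModule ℂ B]
    [FiniteDimensional ℂ B]
    (δ : B →ₗ[ℂ] B ⊗[ℂ] B)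
    (hδ : (LinearMap.mul' ℂ B) ∘ₗ δ = LinearMap.id)
    (A : Fin n → (B →ₗ[ℂ] B))
    (hA : ∀ i, schur (LinearMap.mul' ℂ B) δ (A i) (A i) = A i)
    (hAreal : ∀ i, conjOp (A i) = A i)
    (hAloop : ∀ i, schur (LinearMap.mul' ℂ B) δ (A i) LinearMap.id = 0)
    (Bm : Matrix (Fin (n + 1)) (Fin (n + 1)) ℂ)
    (hBsymm : Bm.IsSymm) (hBdiag : ∀ i, Bm i i = 0)
    (hB01 : ∀ i j, Bm i j = 0 ∨ Bm i j = 1) :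
    ∀ A' : (Fin (n + 1) → B) →ₗ[ℂ] (Fin (n + 1) → B),
      A' = tensOp LinearMap.id Bm +
        ∑ i : Fin n, tensOp (A i) (Matrix.single i.succ i.succ 1) →
      schur (LinearMap.mul' ℂ (Fin (n + 1) → B)) (piComul δ (n + 1)) A' A' = A' ∧
      conjOp A' = A' ∧
      schur (LinearMap.mul' ℂ (Fin (n + 1) → B)) (piComul δ (n + 1)) A' LinearMap.id = 0 :=
  stmt9_general n B δ hδ A hA hAreal hAloop Bm hBdiag hB01
end

section
/- Let Γ be a finite group and π : Γ → U(H) a faithful irreducible unitary representation on a finite-dimensional complex Hilbert space H. Then there exists a vector ξ ∈ H such that the matrix coefficient g ↦ ⟨ξ, π(g) ξ⟩ is injective on Γ (separates the points of Γ). -/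
/-!
Faithfulness makes `π g - π h` a nonzero operator for `g ≠ h`, and over `ℂ` a nonzero operator `T`
has some `ξ` with `⟪ξ, T ξ⟫ ≠ 0` (polarization). It remains to find one `ξ` that works for the
finitely many operators simultaneously. On a real line `t ↦ ξ + t • η` the diagonal coefficient of
`T` is a quadratic polynomial in `t` with constant term `⟪ξ, T ξ⟫` and leading term `⟪η, T η⟫`, so it
vanishes at only finitely many `t` as soon as one of these is nonzero; adding operators one at a
time and avoiding finitely many bad values of `t` gives the common vector.
-/

open scoped InnerProductSpace

section InnerMapSelf

variable {H : Type*} [NormedAddCommGroup H] [InnerProductSpace ℂ H]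

lemma exists_inner_map_self_ne_zero {T : H →ₗ[ℂ] H} (hT : T ≠ 0) : ∃ ξ : H, ⟪ξ, T ξ⟫_ℂ ≠ 0 := by
  by_contra! h
  exact hT <| (inner_map_self_eq_zero T).mp fun x => by rw [← inner_conj_symm, h x, map_zero]

lemma inner_map_self_add_ofReal_smul (T : H →ₗ[ℂ] H) (ξ η : H) (t : ℝ) :
    ⟪ξ + (t : ℂ) • η, T (ξ + (t : ℂ) • η)⟫_ℂ
      = ⟪η, T η⟫_ℂ * t ^ 2 + (⟪ξ, T η⟫_ℂ + ⟪η, T ξ⟫_ℂ) * t + ⟪ξ, T ξ⟫_ℂ := by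
  simp only [map_add, map_smul, inner_add_left, inner_add_right, inner_smul_left,
    inner_smul_right, Complex.conj_ofReal]
  ring

lemma finite_setOf_inner_map_self_add_ofReal_smul_eq_zero (T : H →ₗ[ℂ] H) {ξ η : H}
    (h : ⟪ξ, T ξ⟫_ℂ ≠ 0 ∨ ⟪η, T η⟫_ℂ ≠ 0) :
    {t : ℝ | ⟪ξ + (t : ℂ) • η, T (ξ + (t : ℂ) • η)⟫_ℂ = 0}.Finite := by
  open Polynomial in
  let p : ℂ[X] := C ⟪η, T η⟫_ℂ * X ^ 2 + C (⟪ξ, T η⟫_ℂ + ⟪η, T ξ⟫_ℂ) * X + C ⟪ξ, T ξ⟫_ℂ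
  have hp : p ≠ 0 := by
    intro hp
    have h₀ := congrArg (Polynomial.coeff · 0) hp
    have h₂ := congrArg (Polynomial.coeff · 2) hp
    simp [p, Polynomial.coeff_X, Polynomial.coeff_C] at h₀ h₂
    tauto
  refine ((Polynomial.finite_setOfPred_isRoot hp).preimage
    Complex.ofReal_injective.injOn).subset fun t ht => ?_
  simp only [Set.mem_ofPred_eq, inner_map_self_add_ofReal_smul] at ht
  simpa [p] using ht

lemma exists_forall_inner_map_self_ne_zero (s : Finset (H →ₗ[ℂ] H)) (hs : ∀ T ∈ s, T ≠ 0) :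
    ∃ ξ : H, ∀ T ∈ s, ⟪ξ, T ξ⟫_ℂ ≠ 0 := by
  classical
  induction s using Finset.induction_on with
  | empty => exact ⟨0, by simp⟩
  | insert T s _ ih =>
    obtain ⟨ξ, hξ⟩ := ih fun S hS => hs S (Finset.mem_insert_of_mem hS)
    obtain ⟨η, hη⟩ := exists_inner_map_self_ne_zero (hs T (Finset.mem_insert_self T s))
    have hbad : (⋃ S ∈ insert T s,
        {t : ℝ | ⟪ξ + (t : ℂ) • η, S (ξ + (t : ℂ) • η)⟫_ℂ = 0}).Finite := by
      refine (insert T s).finite_toSet.biUnion fun S hS => ?_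
      rcases Finset.mem_insert.mp hS with rfl | hS
      · exact finite_setOf_inner_map_self_add_ofReal_smul_eq_zero S (.inr hη)
      · exact finite_setOf_inner_map_self_add_ofReal_smul_eq_zero S (.inl (hξ S hS))
    obtain ⟨t, ht⟩ := hbad.exists_notMem
    simp only [Set.mem_iUnion, Set.mem_ofPred_eq, not_exists] at ht
    exact ⟨ξ + (t : ℂ) • η, fun S hS => ht S hS⟩

lemma exists_injective_inner_map_self {Γ : Type*} [Fintype Γ] {f : Γ → H →ₗ[ℂ] H}
    (hf : Function.Injective f) : ∃ ξ : H, Function.Injective fun g => ⟪ξ, f g ξ⟫_ℂ := by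
  classical
  obtain ⟨ξ, hξ⟩ := exists_forall_inner_map_self_ne_zero
    (Finset.univ.offDiag.image fun p => f p.1 - f p.2) (by
      simp only [Finset.mem_image, Finset.mem_offDiag]
      rintro _ ⟨⟨g, h⟩, ⟨-, -, hgh⟩, rfl⟩
      exact sub_ne_zero.mpr (hf.ne hgh))
  refine ⟨ξ, fun g h hgh => by_contra fun hne => hξ (f g - f h) ?_ ?_⟩
  · exact Finset.mem_image_of_mem (fun p : Γ × Γ => f p.1 - f p.2) (a := (g, h))
      (Finset.mem_offDiag.mpr ⟨Finset.mem_univ g, Finset.mem_univ h, hne⟩)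
  · simpa [inner_sub_right, sub_eq_zero] using hgh

end InnerMapSelf

theorem stmt12_general (Γ : Type*) [Group Γ] [Fintype Γ]
    (H : Type*) [NormedAddCommGroup H] [InnerProductSpace ℂ H]
    (π : Γ →* (H →ₗ[ℂ] H))
    (hfaith : Function.Injective π) :
    ∃ ξ : H, Function.Injective (fun g : Γ => ⟪ξ, π g ξ⟫_ℂ) :=
  exists_injective_inner_map_self hfaith

/-- If `π` is a faithful irreducible unitary representation of a finite
group `Γ` on a finite-dimensional complex Hilbert space `H`, then there is a vector
`ξ ∈ H` whose matrix coefficient `g ↦ ⟨ξ, π(g) ξ⟩` separates the points of `Γ`. -/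
theorem stmt12 (Γ : Type*) [Group Γ] [Fintype Γ]
    (H : Type*) [NormedAddCommGroup H] [InnerProductSpace ℂ H] [FiniteDimensional ℂ H]
    (π : Γ →* (H →ₗ[ℂ] H))
    (hunit : ∀ g (x y : H), ⟪π g x, π g y⟫_ℂ = ⟪x, y⟫_ℂ)
    (hfaith : Function.Injective π)
    (hirr : ∀ U : Submodule ℂ H, (∀ g, ∀ x ∈ U, π g x ∈ U) → U = ⊥ ∨ U = ⊤) :
    ∃ ξ : H, Function.Injective (fun g : Γ => ⟪ξ, π g ξ⟫_ℂ) :=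
  stmt12_general Γ H π hfaith
end

section
/- Let Γ be a finite nonabelian group and suppose that for two distinct elements g, h ∈ Γ and every irreducible complex representation α of Γ there is a scalar c_α with α(g) − α(h) = c_α · 1. Then both g and h belong to the center of Γ. -/
/-!
By Maschke's theorem `ℂ[Γ]` is the sum of its simple left ideals `W`, and each of them is a
finite-dimensional irreducible representation of `Γ`. On every such `W` left multiplication by
`g - h` is a scalar, so it commutes with left multiplication by any `t ∈ Γ`; since the `W` span,
`t (g - h) = (g - h) t` in `ℂ[Γ]`. Comparing the coefficients of `tg, th, gt, ht` and using
`g ≠ h` gives `tg = gt` and `th = ht`.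
-/

open MonoidAlgebra

theorem Representation.ofModule'_apply {k G M : Type*} [CommSemiring k] [Monoid G]
    [AddCommMonoid M] [Module k M] [Module (MonoidAlgebra k G) M]
    [IsScalarTower k (MonoidAlgebra k G) M] (g : G) (x : M) :
    Representation.ofModule' (k := k) M g x = of k G g • x := by
  simp [Representation.ofModule']

theorem MonoidAlgebra.smul_mem_of_forall_of_smul_mem {k G M : Type*} [CommSemiring k] [Monoid G]
    [AddCommMonoid M] [Module k M] [Module (MonoidAlgebra k G) M]
    [IsScalarTower k (MonoidAlgebra k G) M] (U : Submodule k M)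
    (hU : ∀ g, ∀ x ∈ U, of k G g • x ∈ U) (a : MonoidAlgebra k G) {x : M} (hx : x ∈ U) :
    a • x ∈ U := by
  induction a using MonoidAlgebra.induction_on with
  | of g => exact hU g x hx
  | add a b ha hb => rw [add_smul]; exact U.add_mem ha hb
  | smul r a ha => rw [smul_assoc]; exact U.smul_mem r ha

theorem Representation.ofModule'_eq_bot_or_eq_top {k G M : Type*} [CommRing k] [Monoid G]
    [AddCommGroup M] [Module k M] [Module (MonoidAlgebra k G) M]
    [IsScalarTower k (MonoidAlgebra k G) M] [IsSimpleModule (MonoidAlgebra k G) M]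
    (U : Submodule k M) (hU : ∀ g, ∀ x ∈ U, Representation.ofModule' (k := k) (G := G) M g x ∈ U) :
    U = ⊥ ∨ U = ⊤ := by
  simp only [ofModule'_apply] at hU
  let U' : Submodule (MonoidAlgebra k G) M :=
    { U with smul_mem' := fun a _ hx ↦ smul_mem_of_forall_of_smul_mem U hU a hx }
  have hU' : U'.restrictScalars k = U := rfl
  rw [← hU', Submodule.restrictScalars_eq_bot_iff, Submodule.restrictScalars_eq_top_iff]
  exact eq_bot_or_eq_top U'

theorem commute_of_forall_isSimpleModule_mul_eq_smul {k A : Type*} [CommSemiring k] [Ring A]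
    [Algebra k A] [IsSemisimpleModule A A] (d : A)
    (hd : ∀ W : Submodule A A, IsSimpleModule A W → ∃ c : k, ∀ x ∈ W, d * x = c • x) (a : A) :
    Commute a d := by
  suffices ∀ x : A, a * (d * x) = d * (a * x) by simpa [Commute, SemiconjBy] using this 1
  intro x
  have hx : x ∈ sSup {W : Submodule A A | IsSimpleModule A W} := by
    rw [IsSemisimpleModule.sSup_simples_eq_top]; trivial
  rw [sSup_eq_iSup'] at hx
  refine Submodule.iSup_induction _ (motive := fun x ↦ a * (d * x) = d * (a * x)) hx ?_ ?_ ?_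
  · intro W x hxW
    obtain ⟨c, hc⟩ := hd W.1 W.2
    have hax : a * x ∈ W.1 := W.1.smul_mem a hxW
    rw [hc x hxW, hc _ hax, mul_smul_comm]
  · simp
  · intro x y hx hy
    simp only [mul_add, hx, hy]

theorem MonoidAlgebra.commute_of_commute_of_sub_of {k G : Type*} [Ring k] [NeZero (2 : k)]
    [Group G] {g h t : G} (hgh : g ≠ h) (H : Commute (of k G t) (of k G g - of k G h)) :
    Commute t g ∧ Commute t h := by
  have : Nontrivial k := ⟨⟨2, 0, two_ne_zero⟩⟩
  have H' : single (t * g) (1 : k) + single (h * t) 1 = single (g * t) 1 + single (t * h) 1 := by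
    have := H.eq
    simp only [mul_sub, sub_mul, of_apply, single_mul_single, mul_one] at this
    rw [← sub_eq_zero] at this ⊢
    rw [← this]; abel
  rw [single_add_single_inj one_ne_zero one_ne_zero] at H'
  rcases H' with ⟨htg, hht⟩ | ⟨-, htg, -⟩ | ⟨h2, -⟩
  · exact ⟨htg, hht.symm⟩
  · exact absurd (mul_left_cancel htg) hgh
  · exact absurd (one_add_one_eq_two.symm.trans h2) two_ne_zero

/-- Irreducibility is phrased as in the theorem; unlike `Representation.IsIrreducible`, it does
not exclude `V = 0`. -/
def SubIsScalarOnIrreducibles (Γ : Type*) [Group Γ] (g h : Γ) : Prop :=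
  ∀ (V : Type) [AddCommGroup V] [Module ℂ V] [FiniteDimensional ℂ V]
    (α : Representation ℂ Γ V),
    (∀ U : Submodule ℂ V, (∀ t : Γ, ∀ x ∈ U, α t x ∈ U) → U = ⊥ ∨ U = ⊤) →
    ∃ c : ℂ, α g - α h = c • LinearMap.id

theorem SubIsScalarOnIrreducibles.of_mulEquiv {Γ Γ' : Type*} [Group Γ] [Group Γ'] (e : Γ' ≃* Γ)
    {g h : Γ} (H : SubIsScalarOnIrreducibles Γ g h) :
    SubIsScalarOnIrreducibles Γ' (e.symm g) (e.symm h) := by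
  intro V _ _ _ α hα
  obtain ⟨c, hc⟩ := H V (α.comp e.symm.toMonoidHom) fun U hU ↦ hα U fun t ↦ by
    simpa using hU (e t)
  exact ⟨c, by simpa using hc⟩

theorem SubIsScalarOnIrreducibles.commute_of_sub_of {Γ : Type} [Group Γ] [Finite Γ] {g h : Γ}
    (H : SubIsScalarOnIrreducibles Γ g h) (a : MonoidAlgebra ℂ Γ) :
    Commute a (of ℂ Γ g - of ℂ Γ h) := by
  refine commute_of_forall_isSimpleModule_mul_eq_smul (k := ℂ) _ (fun W _ ↦ ?_) a
  obtain ⟨c, hc⟩ := H W (Representation.ofModule' W) Representation.ofModule'_eq_bot_or_eq_top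
  refine ⟨c, fun x hx ↦ ?_⟩
  simpa [sub_mul, Representation.ofModule'_apply] using congr(($hc ⟨x, hx⟩ : MonoidAlgebra ℂ Γ))

theorem stmt14_general (Γ : Type*) [Group Γ] [Fintype Γ]
    (g h : Γ) (hgh : g ≠ h)
    (hrep : ∀ (V : Type) [AddCommGroup V] [Module ℂ V] [FiniteDimensional ℂ V]
        (α : Representation ℂ Γ V),
        (∀ U : Submodule ℂ V, (∀ t : Γ, ∀ x ∈ U, α t x ∈ U) → U = ⊥ ∨ U = ⊤) →
        ∃ c : ℂ, α g - α h = c • LinearMap.id) :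
    g ∈ Subgroup.center Γ ∧ h ∈ Subgroup.center Γ := by
  -- `hrep` only speaks about representations in `Type`, while `ℂ[Γ]` lives in `Γ`'s universe.
  let e : Shrink.{0} Γ ≃* Γ := Shrink.mulEquiv
  have hcomm (t : Γ) : Commute t g ∧ Commute t h := by
    have H : SubIsScalarOnIrreducibles (Shrink.{0} Γ) (e.symm g) (e.symm h) :=
      SubIsScalarOnIrreducibles.of_mulEquiv e hrep
    obtain ⟨hg, hh⟩ := MonoidAlgebra.commute_of_commute_of_sub_of (e.symm.injective.ne hgh)
      (H.commute_of_sub_of (of ℂ _ (e.symm t)))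
    simpa using And.intro (hg.map e) (hh.map e)
  simp only [Subgroup.mem_center_iff]
  exact ⟨fun t ↦ (hcomm t).1.eq, fun t ↦ (hcomm t).2.eq⟩

/-- If `Γ` is a finite nonabelian group, `g ≠ h` are elements of `Γ`, and
for every finite-dimensional irreducible complex representation `α` of `Γ` the operator
`α(g) − α(h)` is a scalar multiple of the identity, then both `g` and `h` lie in the
center of `Γ`. -/
theorem stmt14 (Γ : Type*) [Group Γ] [Fintype Γ]
    (hnab : ∃ a b : Γ, a * b ≠ b * a)
    (g h : Γ) (hgh : g ≠ h)
    (hrep : ∀ (V : Type) [AddCommGroup V] [Module ℂ V] [FiniteDimensional ℂ V]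
        (α : Representation ℂ Γ V),
        (∀ U : Submodule ℂ V, (∀ t : Γ, ∀ x ∈ U, α t x ∈ U) → U = ⊥ ∨ U = ⊤) →
        ∃ c : ℂ, α g - α h = c • LinearMap.id) :
    g ∈ Subgroup.center Γ ∧ h ∈ Subgroup.center Γ :=
  stmt14_general Γ g h hgh hrep
end
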